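/- arXiv:1907.00627 — 8 statements merged into one kernel-verified Lean document; each statement's English description precedes it below -/
import Mathlib

section
/- Let (X,d) be a complete metric space, 𝓘 ⊆ X a nonempty, closed and bounded subset, and {T_k}_{k∈ℕ} a sequence of maps T_k : X → X such that 𝓘 is an invariant set for {T_k} (i.e. T_k(𝓘) ⊆ 𝓘 for all k). Suppose each T_k is Lipschitz on 𝓘 with constant c_k ≥ 0 and that ∑_{k=1}^∞ ∏_{j=1}^k c_j < ∞. Then there exists a point a ∈ 𝓘 such that for every initial point x_0 ∈ 𝓘, the backward trajectory Ψ_k(x_0) := T_1 ∘ T_2 ∘ ⋯ ∘ T_k (x_0) converges to a as k → ∞; in particular the limit is independent of the choice of x_0 ∈ 𝓘. -/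
/-! The composite `T 0 ∘ ⋯ ∘ T (k-1)` is Lipschitz on `I` with constant `∏_{j<k} c j`, so
consecutive terms of a backward trajectory are at most `(∏_{j<k} c j) · diam I` apart. Summability
makes every trajectory Cauchy, and since the constants tend to `0`, any two trajectories
starting in `I` are asymptotic, hence share the limit. -/

open Filter Topology

/-- Backward trajectory of a sequence of self-maps:
`backwardTraj T k = T 0 ∘ T 1 ∘ ⋯ ∘ T (k-1)` (so the most recently applied map is the
innermost one). -/
def backwardTraj {α : Type*} (T : ℕ → α → α) : ℕ → α → α
  | 0 => id
  | k + 1 => fun a => backwardTraj T k (T k a)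

namespace backwardTraj

variable {X : Type*} {I : Set X} {T : ℕ → X → X} {c : ℕ → ℝ}

theorem mapsTo (hinv : ∀ k, Set.MapsTo (T k) I I) (k : ℕ) :
    Set.MapsTo (backwardTraj T k) I I := by
  induction k with
  | zero => exact Set.mapsTo_id I
  | succ k ih => exact ih.comp (hinv k)

variable [PseudoMetricSpace X]

theorem dist_le (hinv : ∀ k, Set.MapsTo (T k) I I) (hc : ∀ k, 0 ≤ c k)
    (hlip : ∀ k, ∀ x ∈ I, ∀ y ∈ I, dist (T k x) (T k y) ≤ c k * dist x y)
    (k : ℕ) {x y : X} (hx : x ∈ I) (hy : y ∈ I) :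
    dist (backwardTraj T k x) (backwardTraj T k y) ≤ (∏ j ∈ Finset.range k, c j) * dist x y := by
  induction k generalizing x y with
  | zero => simp [backwardTraj]
  | succ k ih =>
    calc dist (backwardTraj T (k + 1) x) (backwardTraj T (k + 1) y)
        ≤ (∏ j ∈ Finset.range k, c j) * dist (T k x) (T k y) := ih (hinv k hx) (hinv k hy)
      _ ≤ (∏ j ∈ Finset.range k, c j) * (c k * dist x y) :=
          mul_le_mul_of_nonneg_left (hlip k x hx y hy) (Finset.prod_nonneg fun j _ => hc j)
      _ = (∏ j ∈ Finset.range (k + 1), c j) * dist x y := by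
          rw [Finset.prod_range_succ, mul_assoc]

theorem cauchySeq (hbd : Bornology.IsBounded I) (hinv : ∀ k, Set.MapsTo (T k) I I)
    (hc : ∀ k, 0 ≤ c k)
    (hlip : ∀ k, ∀ x ∈ I, ∀ y ∈ I, dist (T k x) (T k y) ≤ c k * dist x y)
    (hsum : Summable fun k => ∏ j ∈ Finset.range k, c j) {x : X} (hx : x ∈ I) :
    CauchySeq fun k => backwardTraj T k x := by
  refine cauchySeq_of_dist_le_of_summable (fun k => (∏ j ∈ Finset.range k, c j) * Metric.diam I)
    (fun k => ?_) (hsum.mul_right _)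
  calc dist (backwardTraj T k x) (backwardTraj T k (T k x))
      ≤ (∏ j ∈ Finset.range k, c j) * dist x (T k x) := dist_le hinv hc hlip k hx (hinv k hx)
    _ ≤ (∏ j ∈ Finset.range k, c j) * Metric.diam I :=
        mul_le_mul_of_nonneg_left (Metric.dist_le_diam_of_mem hbd hx (hinv k hx))
          (Finset.prod_nonneg fun j _ => hc j)

theorem tendsto_dist_zero (hinv : ∀ k, Set.MapsTo (T k) I I) (hc : ∀ k, 0 ≤ c k)
    (hlip : ∀ k, ∀ x ∈ I, ∀ y ∈ I, dist (T k x) (T k y) ≤ c k * dist x y)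
    (hprod : Tendsto (fun k => ∏ j ∈ Finset.range k, c j) atTop (𝓝 0))
    {x y : X} (hx : x ∈ I) (hy : y ∈ I) :
    Tendsto (fun k => dist (backwardTraj T k x) (backwardTraj T k y)) atTop (𝓝 0) := by
  refine squeeze_zero (fun k => dist_nonneg) (fun k => dist_le hinv hc hlip k hx hy) ?_
  simpa using hprod.mul_const (dist x y)

end backwardTraj

/-- For a sequence of maps `T_k` leaving a nonempty closed bounded set `𝓘`
of a complete metric space invariant, each Lipschitz on `𝓘` with constant `c k`, and with
`∑_k ∏_{j≤k} c j < ∞`, the backward trajectories converge to a single point `a ∈ 𝓘`,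
independent of the starting point in `𝓘`. -/
theorem backwardTraj_tendsto_of_summable {X : Type*} [MetricSpace X] [CompleteSpace X]
    (I : Set X) (hne : I.Nonempty) (hcl : IsClosed I) (hbd : Bornology.IsBounded I)
    (T : ℕ → X → X) (hinv : ∀ k, Set.MapsTo (T k) I I)
    (c : ℕ → ℝ) (hc : ∀ k, 0 ≤ c k)
    (hlip : ∀ k, ∀ x ∈ I, ∀ y ∈ I, dist (T k x) (T k y) ≤ c k * dist x y)
    (hsum : Summable fun k => ∏ j ∈ Finset.range (k + 1), c j) :
    ∃ a ∈ I, ∀ x₀ ∈ I, Tendsto (fun k => backwardTraj T k x₀) atTop (𝓝 a) := by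
  have hsum' : Summable fun k => ∏ j ∈ Finset.range k, c j := (summable_nat_add_iff 1).mp hsum
  obtain ⟨x, hx⟩ := hne
  obtain ⟨a, ha⟩ :=
    cauchySeq_tendsto_of_complete (backwardTraj.cauchySeq hbd hinv hc hlip hsum' hx)
  refine ⟨a, hcl.mem_of_tendsto ha (.of_forall fun k => backwardTraj.mapsTo hinv k hx),
    fun y hy => ?_⟩
  exact ha.congr_dist
    (backwardTraj.tendsto_dist_zero hinv hc hlip hsum'.tendsto_atTop_zero hx hy)
end

section
/- Let (X,d) be a complete metric space. For each k ∈ ℕ let 𝓕_k = {f_{1,k}, …, f_{n_k,k}} be a finite family of contractions on X, with d(f_{i,k}(x), f_{i,k}(y)) ≤ s_{i,k}·d(x,y) where s_{i,k} < 1, and let L_k := max_{1≤i≤n_k} s_{i,k}. Suppose (i) there exists a nonempty, closed and bounded set 𝓘 ⊆ X with f_{i,k}(𝓘) ⊆ 𝓘 for all i ∈ {1,…,n_k} and all k ∈ ℕ, and (ii) ∑_{k=1}^∞ ∏_{j=1}^k L_j < ∞. Then there exists a nonempty compact set A ⊆ 𝓘 such that for every nonempty compact set A_0 ⊆ 𝓘,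 the backward trajectories Ψ_k(A_0) := 𝓕_1 ∘ 𝓕_2 ∘ ⋯ ∘ 𝓕_k (A_0) converge to A in the Hausdorff distance as k → ∞; in particular the limit A is independent of A_0. -/
/-!
The Hutchinson map of `𝓕_k` is `L_k`-Lipschitz for the Hausdorff metric on the complete space of
nonempty compact sets, and it maps the bounded set of compacta contained in `𝓘` into itself.
Hence `Ψ_k` is `(L_1 ⋯ L_k)`-Lipschitz there, so two trajectories, as well as two consecutive
terms of one trajectory, are at distance at most `L_1 ⋯ L_k · diam 𝓘` at time `k`. Summability
of these products makes every trajectory Cauchy, and all of them share its limit.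
-/

open Filter Topology

open Set Metric TopologicalSpace
open scoped NNReal ENNReal

section BackwardTraj

variable {α β : Type*} {T : ℕ → α → α} {s : Set α}

theorem mapsTo_backwardTraj (hmaps : ∀ k, MapsTo (T k) s s) (k : ℕ) :
    MapsTo (backwardTraj T k) s s := by
  induction k with
  | zero => exact mapsTo_id s
  | succ k ih => exact ih.comp (hmaps k)

theorem Function.Semiconj.backwardTraj {U : ℕ → β → β} {φ : α → β}
    (h : ∀ k, Function.Semiconj φ (T k) (U k)) (k : ℕ) :
    Function.Semiconj φ (_root_.backwardTraj T k) (_root_.backwardTraj U k) := by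
  induction k with
  | zero => exact fun _ => rfl
  | succ k ih => exact ih.comp_right (h k)

theorem lipschitzOnWith_backwardTraj [PseudoEMetricSpace α] {L : ℕ → ℝ≥0}
    (hlip : ∀ k, LipschitzOnWith (L k) (T k) s) (hmaps : ∀ k, MapsTo (T k) s s) (k : ℕ) :
    LipschitzOnWith (∏ j ∈ Finset.range k, L j) (backwardTraj T k) s := by
  induction k with
  | zero => simpa [backwardTraj] using LipschitzWith.id.lipschitzOnWith
  | succ k ih =>
    rw [Finset.prod_range_succ]
    exact ih.comp (hlip k) (hmaps k)

theorem exists_tendsto_backwardTraj [PseudoMetricSpace α] [CompleteSpace α] {L : ℕ → ℝ≥0}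
    (hs : Bornology.IsBounded s) (hne : s.Nonempty) (hmaps : ∀ k, MapsTo (T k) s s)
    (hlip : ∀ k, LipschitzOnWith (L k) (T k) s)
    (hsum : Summable fun k => ∏ j ∈ Finset.range k, (L j : ℝ)) :
    ∃ a ∈ closure s, ∀ b ∈ s, Tendsto (fun k => backwardTraj T k b) atTop (𝓝 a) := by
  obtain ⟨x, hx⟩ := hne
  have hdist : ∀ k, ∀ y ∈ s, ∀ z ∈ s, dist (backwardTraj T k y) (backwardTraj T k z) ≤
      (∏ j ∈ Finset.range k, (L j : ℝ)) * diam s := fun k y hy z hz => by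
    refine ((lipschitzOnWith_backwardTraj hlip hmaps k).dist_le_mul y hy z hz).trans ?_
    push_cast
    gcongr
    exact dist_le_diam_of_mem hs hy hz
  obtain ⟨a, ha⟩ := cauchySeq_tendsto_of_complete <| cauchySeq_of_dist_le_of_summable _
    (fun k => hdist k x hx (T k x) (hmaps k hx)) (hsum.mul_right _)
  refine ⟨a, mem_closure_of_tendsto ha (.of_forall fun k => mapsTo_backwardTraj hmaps k hx),
    fun b hb => ha.congr_dist ?_⟩
  refine squeeze_zero (fun _ => dist_nonneg) (fun k => hdist k x hx b hb) ?_
  simpa using hsum.tendsto_atTop_zero.mul_const (diam s)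

end BackwardTraj

section Hausdorff

variable {X Y : Type*} [PseudoEMetricSpace X] [PseudoEMetricSpace Y] {K : ℝ≥0} {s t : Set X}

theorem LipschitzWith.infEDist_image_le {f : X → Y} (hf : LipschitzWith K f) (ht : t.Nonempty)
    (x : X) : infEDist (f x) (f '' t) ≤ K * infEDist x t := by
  have := ht.to_subtype
  calc infEDist (f x) (f '' t) ≤ ⨅ y : t, K * edist x y := le_iInf fun y =>
        (infEDist_le_edist_of_mem (mem_image_of_mem f y.2)).trans (hf.edist_le_mul x y)
    _ = K * infEDist x t := by rw [infEDist, ← iInf_subtype'', ENNReal.mul_iInf (by simp)]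

theorem LipschitzWith.hausdorffEDist_image_le {f : X → Y} (hf : LipschitzWith K f)
    (hs : s.Nonempty) (ht : t.Nonempty) :
    hausdorffEDist (f '' s) (f '' t) ≤ K * hausdorffEDist s t := by
  refine hausdorffEDist_le_of_infEDist ?_ ?_ <;> rintro _ ⟨x, hx, rfl⟩
  · exact (hf.infEDist_image_le ht x).trans (by gcongr; exact infEDist_le_hausdorffEDist_of_mem hx)
  · rw [hausdorffEDist_comm]
    exact (hf.infEDist_image_le hs x).trans (by gcongr; exact infEDist_le_hausdorffEDist_of_mem hx)

theorem hausdorffEDist_iUnion_image_le {ι : Type*} {g : ι → X → Y}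
    (hg : ∀ i, LipschitzWith K (g i)) (hs : s.Nonempty) (ht : t.Nonempty) :
    hausdorffEDist (⋃ i, g i '' s) (⋃ i, g i '' t) ≤ K * hausdorffEDist s t :=
  hausdorffEDist_iUnion_le.trans <| iSup_le fun i => (hg i).hausdorffEDist_image_le hs ht

end Hausdorff

namespace TopologicalSpace.NonemptyCompacts

variable {X ι : Type*} [Finite ι] [Nonempty ι] {g : ι → X → X}

def hutchinson [TopologicalSpace X] (g : ι → X → X) (hg : ∀ i, Continuous (g i))
    (K : NonemptyCompacts X) : NonemptyCompacts X where
  carrier := ⋃ i, g i '' K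
  isCompact' := isCompact_iUnion fun i => K.isCompact.image (hg i)
  nonempty' := (K.nonempty.image _).mono (subset_iUnion (fun i => g i '' K) (Classical.arbitrary ι))

@[simp]
theorem coe_hutchinson [TopologicalSpace X] (hg : ∀ i, Continuous (g i)) (K : NonemptyCompacts X) :
    (hutchinson g hg K : Set X) = ⋃ i, g i '' K :=
  rfl

theorem lipschitzWith_hutchinson [EMetricSpace X] {L : ℝ≥0} (hg : ∀ i, LipschitzWith L (g i)) :
    LipschitzWith L (hutchinson g fun i => (hg i).continuous) := fun K K' =>
  hausdorffEDist_iUnion_image_le hg K.nonempty K'.nonempty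

theorem mapsTo_hutchinson [TopologicalSpace X] {I : Set X} (hg : ∀ i, Continuous (g i))
    (hI : ∀ i, MapsTo (g i) I I) :
    MapsTo (hutchinson g hg) {K | (K : Set X) ⊆ I} {K | (K : Set X) ⊆ I} := fun _ hK =>
  iUnion_subset fun i => (image_mono hK).trans (hI i).image_subset

theorem isBounded_setOf_coe_subset [MetricSpace X] {I : Set X} (hI : Bornology.IsBounded I) :
    Bornology.IsBounded {K : NonemptyCompacts X | (K : Set X) ⊆ I} :=
  isBounded_iff.2 ⟨diam I, fun K hK K' hK' =>
    (hausdorffDist_le_diam K.nonempty K.isCompact.isBounded K'.nonempty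
      K'.isCompact.isBounded).trans (diam_mono (union_subset hK hK') hI)⟩

end TopologicalSpace.NonemptyCompacts

theorem backward_hutchinson_tendsto_general {X : Type*} [MetricSpace X] [CompleteSpace X]
    (n : ℕ → ℕ) (hn : ∀ k, 0 < n k)
    (f : (k : ℕ) → Fin (n k) → X → X) (s : (k : ℕ) → Fin (n k) → NNReal)
    (hf : ∀ k i, LipschitzWith (s k i) (f k i))
    (I : Set X) (hne : I.Nonempty) (hcl : IsClosed I) (hbd : Bornology.IsBounded I)
    (hinv : ∀ k i, Set.MapsTo (f k i) I I)
    (hsum : Summable fun k => ∏ j ∈ Finset.range (k + 1),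
      ((Finset.univ.sup (s j) : NNReal) : ℝ)) :
    ∃ A : Set X, A ⊆ I ∧ A.Nonempty ∧ IsCompact A ∧
      ∀ A₀ : Set X, A₀ ⊆ I → A₀.Nonempty → IsCompact A₀ →
        Tendsto (fun k => Metric.hausdorffDist
          (backwardTraj (fun k S => ⋃ i, f k i '' S) k A₀) A) atTop (𝓝 0) := by
  have (k : ℕ) : Nonempty (Fin (n k)) := ⟨⟨0, hn k⟩⟩
  have hf_sup (k : ℕ) (i : Fin (n k)) : LipschitzWith (Finset.univ.sup (s k)) (f k i) :=
    (hf k i).weaken (Finset.le_sup (Finset.mem_univ i))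
  set T := fun k => NonemptyCompacts.hutchinson (f k) fun i => (hf_sup k i).continuous
  obtain ⟨x, hx⟩ := hne
  obtain ⟨A, hAI, hA⟩ := exists_tendsto_backwardTraj (T := T)
    (NonemptyCompacts.isBounded_setOf_coe_subset hbd) ⟨{x}, by simpa using hx⟩
    (fun k => NonemptyCompacts.mapsTo_hutchinson _ (hinv k))
    (fun k => (NonemptyCompacts.lipschitzWith_hutchinson (hf_sup k)).lipschitzOnWith)
    ((summable_nat_add_iff 1).1 hsum)
  refine ⟨A, (NonemptyCompacts.isClosed_subsets_of_isClosed hcl).closure_subset hAI, A.nonempty,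
    A.isCompact, fun A₀ hA₀I hA₀ hA₀c => ?_⟩
  have hcoe (k : ℕ) : Function.Semiconj ((↑) : NonemptyCompacts X → Set X)
      (backwardTraj T k) (backwardTraj (fun k S => ⋃ i, f k i '' S) k) := by
    apply Function.Semiconj.backwardTraj
    exact fun _ K => NonemptyCompacts.coe_hutchinson _ K
  have hlim := tendsto_iff_dist_tendsto_zero.1 (hA ⟨⟨A₀, hA₀c⟩, hA₀⟩ hA₀I)
  simp only [NonemptyCompacts.dist_eq, hcoe _ _] at hlim
  exact hlim

/-- Let `𝓕_k = {f_{i,k}}` be finite families of contractions on a complete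
metric space, all leaving a nonempty closed bounded set `𝓘` invariant, with
`L_k = max_i Lip(f_{i,k})` satisfying `∑_k ∏_{j≤k} L_j < ∞`. Then the backward trajectories
of the induced Hutchinson maps converge, in the Hausdorff distance, to a single nonempty
compact set `A ⊆ 𝓘`, independent of the nonempty compact starting set `A₀ ⊆ 𝓘`. -/
theorem backward_hutchinson_tendsto {X : Type*} [MetricSpace X] [CompleteSpace X]
    (n : ℕ → ℕ) (hn : ∀ k, 0 < n k)
    (f : (k : ℕ) → Fin (n k) → X → X) (s : (k : ℕ) → Fin (n k) → NNReal)
    (hf : ∀ k i, LipschitzWith (s k i) (f k i)) (hs : ∀ k i, s k i < 1)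
    (I : Set X) (hne : I.Nonempty) (hcl : IsClosed I) (hbd : Bornology.IsBounded I)
    (hinv : ∀ k i, Set.MapsTo (f k i) I I)
    (hsum : Summable fun k => ∏ j ∈ Finset.range (k + 1),
      ((Finset.univ.sup (s j) : NNReal) : ℝ)) :
    ∃ A : Set X, A ⊆ I ∧ A.Nonempty ∧ IsCompact A ∧
      ∀ A₀ : Set X, A₀ ⊆ I → A₀.Nonempty → IsCompact A₀ →
        Tendsto (fun k => Metric.hausdorffDist
          (backwardTraj (fun k S => ⋃ i, f k i '' S) k A₀) A) atTop (𝓝 0) :=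
  backward_hutchinson_tendsto_general n hn f s hf I hne hcl hbd hinv hsum
end

section
/- Let X be a nonempty set, (Y, d_Y) a metric space, and l_1, …, l_n : X → X a partition family for X. For i = 1,…,n let F_i : X × Y → Y be uniformly contractive in the second variable with common constant c ∈ [0,1): d_Y(F_i(x,y_1), F_i(x,y_2)) ≤ c·d_Y(y_1,y_2) for all x ∈ X, y_1,y_2 ∈ Y. Let T be the Read–Bajraktarević operator determined by T g (l_i(x)) = F_i(x, g(x)) for all x ∈ X and i = 1,…,n. Then for all functions g, h : X → Y, sup_{x∈X} d_Y(T g(x), T h(x)) ≤ c · sup_{x∈X} d_Y(g(x), h(x)) (the suprema taken in [0,∞]). -/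
open Filter Topology

/-- For a partition family `l_1, …, l_n` of `X` and maps `F_i : X × Y → Y`
uniformly contractive in the second variable with constant `c ∈ [0,1)`, the
Read–Bajraktarević operator `T` determined by `T g (l i x) = F i x (g x)` satisfies
`sup_x d(Tg x, Th x) ≤ c · sup_x d(g x, h x)` (suprema in `[0,∞]`). -/
theorem RB_operator_contractive {X Y : Type*} [Nonempty X] [MetricSpace Y]
    (n : ℕ) (l : Fin n → X → X)
    (hinj : ∀ i, Function.Injective (l i))
    (hcover : (⋃ i, Set.range (l i)) = Set.univ)
    (hdisj : ∀ i j, i ≠ j → Set.range (l i) ∩ Set.range (l j) = ∅)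
    (F : Fin n → X → Y → Y) (c : ℝ) (hc0 : 0 ≤ c) (hc1 : c < 1)
    (hF : ∀ i x y₁ y₂, dist (F i x y₁) (F i x y₂) ≤ c * dist y₁ y₂)
    (T : (X → Y) → (X → Y))
    (hT : ∀ g i x, T g (l i x) = F i x (g x)) :
    ∀ g h : X → Y,
      (⨆ x, edist (T g x) (T h x)) ≤ ENNReal.ofReal c * ⨆ x, edist (g x) (h x) := by
  intro g h
  refine iSup_le fun x => ?_
  have hx : x ∈ ⋃ i, Set.range (l i) := by rw [hcover]; trivial
  obtain ⟨_, ⟨i, rfl⟩, x', rfl⟩ := hx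
  rw [hT g i x', hT h i x']
  calc edist (F i x' (g x')) (F i x' (h x'))
      = ENNReal.ofReal (dist (F i x' (g x')) (F i x' (h x'))) := (edist_dist _ _)
    _ ≤ ENNReal.ofReal (c * dist (g x') (h x')) := ENNReal.ofReal_le_ofReal (hF i x' _ _)
    _ = ENNReal.ofReal c * ENNReal.ofReal (dist (g x') (h x')) :=
        ENNReal.ofReal_mul hc0
    _ = ENNReal.ofReal c * edist (g x') (h x') := by rw [edist_dist]
    _ ≤ ENNReal.ofReal c * ⨆ y, edist (g y) (h y) := by
        gcongr; exact le_iSup (fun y => edist (g y) (h y)) x'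
end

section
/- Let X be a nonempty set, (Y, d_Y) a complete metric space, and l_1, …, l_n : X → X a partition family for X. For i = 1,…,n let F_i : X × Y → Y satisfy: (i) uniform contractivity in the second variable with constant c ∈ [0,1): d_Y(F_i(x,y_1), F_i(x,y_2)) ≤ c·d_Y(y_1,y_2) for all x ∈ X, y_1, y_2 ∈ Y; and (ii) for some (equivalently, every) y_0 ∈ Y, the function x ↦ F_i(x, y_0) has bounded range in Y. Then there exists a unique bounded function f* : X → Y (i.e. f* has bounded range) satisfying the self-referential equation f*(l_i(x)) = F_i(x, f*(x)) for all x ∈ X and all i = 1,…,n. -/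
open Filter Topology BoundedContinuousFunction

/-- For a partition family `l_1, …, l_n` of `X` and maps `F_i : X × Y → Y`
into a complete metric space `Y` which are uniformly contractive in the second variable with
constant `c ∈ [0,1)` and such that `x ↦ F i x y₀` has bounded range for some `y₀`, there is
a unique bounded function `f* : X → Y` satisfying the self-referential equation
`f* (l i x) = F i x (f* x)` for all `i` and `x`. -/
theorem exists_unique_bounded_fractal_function {X Y : Type*} [Nonempty X]
    [MetricSpace Y] [CompleteSpace Y]
    (n : ℕ) (l : Fin n → X → X)
    (hinj : ∀ i, Function.Injective (l i))
    (hcover : (⋃ i, Set.range (l i)) = Set.univ)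
    (hdisj : ∀ i j, i ≠ j → Set.range (l i) ∩ Set.range (l j) = ∅)
    (F : Fin n → X → Y → Y) (c : ℝ) (hc0 : 0 ≤ c) (hc1 : c < 1)
    (hF : ∀ i x y₁ y₂, dist (F i x y₁) (F i x y₂) ≤ c * dist y₁ y₂)
    (hFb : ∀ i, ∃ y₀, Bornology.IsBounded (Set.range fun x => F i x y₀)) :
    ∃! fs : X → Y, Bornology.IsBounded (Set.range fs) ∧
      ∀ i x, fs (l i x) = F i x (fs x) := by
  classical
  -- decode each point of X as `l i x` for a unique `(i, x)`
  have hX : ∀ z : X, ∃ p : Fin n × X, l p.1 p.2 = z := by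
    intro z
    have hz : z ∈ ⋃ i, Set.range (l i) := hcover ▸ Set.mem_univ z
    rcases Set.mem_iUnion.1 hz with ⟨i, x, hx⟩
    exact ⟨(i, x), hx⟩
  choose σ hσ using hX
  have huniq : ∀ (i : Fin n) (x : X) (j : Fin n) (x' : X),
      l i x = l j x' → i = j ∧ x = x' := by
    intro i x j x' h
    have hij : i = j := by
      by_contra hne
      have hmem : l i x ∈ Set.range (l i) ∩ Set.range (l j) := ⟨⟨x, rfl⟩, ⟨x', h.symm⟩⟩
      simp [hdisj i j hne] at hmem
    subst hij
    exact ⟨rfl, hinj i h⟩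
  have hσ1 : ∀ i x, σ (l i x) = (i, x) := by
    intro i x
    obtain ⟨h1, h2⟩ := huniq _ _ _ _ (hσ (l i x))
    exact Prod.ext h1 h2
  choose yb hyb using hFb
  obtain ⟨x₀⟩ := ‹Nonempty X›
  have hFinN : Nonempty (Fin n) := ⟨(σ x₀).1⟩
  obtain ⟨i₀⟩ := hFinN
  have hY : Nonempty Y := ⟨yb i₀⟩
  letI : TopologicalSpace X := ⊥
  haveI : DiscreteTopology X := ⟨rfl⟩
  haveI : Nonempty (X →ᵇ Y) := ⟨BoundedContinuousFunction.const X (yb i₀)⟩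
  -- boundedness of the transformed function
  have hbdd : ∀ g : X → Y, Bornology.IsBounded (Set.range g) →
      Bornology.IsBounded (Set.range fun z => F (σ z).1 (σ z).2 (g (σ z).2)) := by
    intro g hg
    have hsub : (Set.range fun z => F (σ z).1 (σ z).2 (g (σ z).2)) ⊆
        ⋃ i : Fin n, Set.range fun x => F i x (g x) := by
      rintro _ ⟨z, rfl⟩
      exact Set.mem_iUnion.2 ⟨(σ z).1, (σ z).2, rfl⟩
    refine Bornology.IsBounded.subset ?_ hsub
    rw [Bornology.isBounded_iUnion]
    intro i
    rcases Metric.isBounded_range_iff.1 hg with ⟨Cg, hCg⟩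
    rcases Metric.isBounded_range_iff.1 (hyb i) with ⟨Cb, hCb⟩
    have hgy : ∀ x, dist (g x) (yb i) ≤ Cg + dist (g x₀) (yb i) := fun x =>
      (dist_triangle (g x) (g x₀) (yb i)).trans (by gcongr; exact hCg x x₀)
    refine Metric.isBounded_range_iff.2
      ⟨c * (Cg + dist (g x₀) (yb i)) + Cb + c * (Cg + dist (g x₀) (yb i)), fun x x' => ?_⟩
    calc dist (F i x (g x)) (F i x' (g x'))
        ≤ dist (F i x (g x)) (F i x (yb i)) + dist (F i x (yb i)) (F i x' (yb i)) +
            dist (F i x' (yb i)) (F i x' (g x')) := dist_triangle4 _ _ _ _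
      _ ≤ c * dist (g x) (yb i) + Cb + c * dist (yb i) (g x') := by
          gcongr
          · exact hF i x _ _
          · exact hCb x x'
          · exact hF i x' _ _
      _ ≤ c * (Cg + dist (g x₀) (yb i)) + Cb + c * (Cg + dist (g x₀) (yb i)) := by
          gcongr
          · exact hgy x
          · rw [dist_comm]; exact hgy x'
  -- the Read–Bajraktarević operator on bounded functions
  let T : (X →ᵇ Y) → (X →ᵇ Y) := fun f =>
    ⟨⟨fun z => F (σ z).1 (σ z).2 (f (σ z).2), continuous_of_discreteTopology⟩,
      Metric.isBounded_range_iff.1 (hbdd f f.isBounded_range)⟩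
  have hT_apply : ∀ (f : X →ᵇ Y) (z : X), T f z = F (σ z).1 (σ z).2 (f (σ z).2) := fun _ _ => rfl
  -- T is a contraction with constant c
  have hlip : LipschitzWith ⟨c, hc0⟩ T := by
    refine LipschitzWith.of_dist_le_mul fun f g => ?_
    rw [BoundedContinuousFunction.dist_le (by positivity)]
    intro z
    calc dist (T f z) (T g z) ≤ c * dist (f (σ z).2) (g (σ z).2) := hF _ _ _ _
      _ ≤ c * dist f g := by
          gcongr
          exact BoundedContinuousFunction.dist_coe_le_dist _
  have hcontr : ContractingWith ⟨c, hc0⟩ T := ⟨by exact_mod_cast hc1, hlip⟩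
  -- the fixed point
  let f₀ : X →ᵇ Y := ContractingWith.fixedPoint T hcontr
  have hf₀ : T f₀ = f₀ := hcontr.fixedPoint_isFixedPt
  have key : ∀ f : X →ᵇ Y, T f = f ↔ ∀ i x, f (l i x) = F i x (f x) := by
    intro f
    constructor
    · intro h i x
      have := congrArg (fun g : X →ᵇ Y => g (l i x)) h
      simpa [hT_apply, hσ1 i x] using this.symm
    · intro h
      ext z
      rw [hT_apply, ← hσ z]
      simp only [hσ1]
      exact (h _ _).symm
  refine ⟨⇑f₀, ⟨f₀.isBounded_range, (key f₀).1 hf₀⟩, ?_⟩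
  rintro g ⟨hgb, hgeq⟩
  -- g comes from a bounded continuous function which is a fixed point of T
  let g' : X →ᵇ Y := ⟨⟨g, continuous_of_discreteTopology⟩, Metric.isBounded_range_iff.1 hgb⟩
  have : g' = f₀ := hcontr.fixedPoint_unique ((key g').2 hgeq)
  calc g = ⇑g' := rfl
    _ = ⇑f₀ := by rw [this]
end

section
/- Let (X, d_X) and (Y, d_Y) be metric spaces, let l : X → X be Lipschitz with constant a < 1, and let F : X × Y → Y satisfy d_Y(F(x_1,y), F(x_2,y)) ≤ L·d_X(x_1,x_2) for all y ∈ Y (with L > 0) and d_Y(F(x,y_1), F(x,y_2)) ≤ c·d_Y(y_1,y_2) for all x ∈ X, where c ∈ [0,1). Set θ := (1−a)/(2L) and define w : X × Y → X × Y by w(x,y) := (l(x), F(x,y)). Then w is a contraction with respect to the metric d_θ((x_1,y_1),(x_2,y_2)) := d_X(x_1,x_2) + θ·d_Y(y_1,y_2): for all (x_1,y_1), (x_2,y_2) ∈ X × Y, d_θ(w(x_1,y_1), w(x_2,y_2)) ≤ max{(1+a)/2, c} · d_θ((x_1,y_1),(x_2,y_2)), and max{(1+a)/2, c} < 1. -/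
/-- If `l : X → X` is Lipschitz with constant `a < 1` and
`F : X × Y → Y` is Lipschitz with constant `L > 0` in the first variable and uniformly
contractive with constant `c ∈ [0,1)` in the second, then `w(x,y) := (l x, F x y)` is a
contraction with factor `max((1+a)/2, c) < 1` in the metric
`d_θ = d_X + θ d_Y`, `θ = (1-a)/(2L)`. -/
theorem prod_map_contraction {X Y : Type*} [MetricSpace X] [MetricSpace Y]
    (l : X → X) (a : ℝ) (ha0 : 0 ≤ a) (ha1 : a < 1)
    (hl : ∀ x₁ x₂, dist (l x₁) (l x₂) ≤ a * dist x₁ x₂)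
    (F : X → Y → Y) (L : ℝ) (hL : 0 < L)
    (hF1 : ∀ y x₁ x₂, dist (F x₁ y) (F x₂ y) ≤ L * dist x₁ x₂)
    (c : ℝ) (hc0 : 0 ≤ c) (hc1 : c < 1)
    (hF2 : ∀ x y₁ y₂, dist (F x y₁) (F x y₂) ≤ c * dist y₁ y₂) :
    (∀ x₁ y₁ x₂ y₂,
      dist (l x₁) (l x₂) + (1 - a) / (2 * L) * dist (F x₁ y₁) (F x₂ y₂) ≤
        max ((1 + a) / 2) c * (dist x₁ x₂ + (1 - a) / (2 * L) * dist y₁ y₂)) ∧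
      max ((1 + a) / 2) c < 1 := by
  have hθ : 0 ≤ (1 - a) / (2 * L) := div_nonneg (by linarith) (by linarith)
  constructor
  · intro x₁ y₁ x₂ y₂
    have hF : dist (F x₁ y₁) (F x₂ y₂) ≤ L * dist x₁ x₂ + c * dist y₁ y₂ :=
      (dist_triangle _ (F x₂ y₁) _).trans (add_le_add (hF1 y₁ x₁ x₂) (hF2 x₂ y₁ y₂))
    have h1 : dist (l x₁) (l x₂) + (1 - a) / (2 * L) * dist (F x₁ y₁) (F x₂ y₂) ≤
        (1 + a) / 2 * dist x₁ x₂ + c * ((1 - a) / (2 * L) * dist y₁ y₂) := by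
      have h0 := hl x₁ x₂
      have h2 := mul_le_mul_of_nonneg_left hF hθ
      have h3 : (1 - a) / (2 * L) * (L * dist x₁ x₂ + c * dist y₁ y₂) =
          (1 - a) / 2 * dist x₁ x₂ + c * ((1 - a) / (2 * L) * dist y₁ y₂) := by
        field_simp
      linarith
    refine h1.trans ?_
    rw [mul_add]
    have hm : 0 ≤ (1 - a) / (2 * L) * dist y₁ y₂ := mul_nonneg hθ dist_nonneg
    gcongr
    · exact le_max_left _ _
    · exact le_max_right _ _
  · exact max_lt (by linarith) hc1
end

section
/- Let X be a nonempty set and Y a Banach space over ℝ. For each k ∈ ℕ let l_{1,k}, …, l_{n_k,k} : X → X be a partition family for X, let q_{i,k} : X → Y and S_{i,k} : X → ℝ be functions, and let T_k be the affine Read–Bajraktarević operator determined by T_k g (l_{i,k}(x)) = q_{i,k}(x) + S_{i,k}(x)·g(x) for all x ∈ X, i = 1,…,n_k. Suppose there exist s ∈ [0,1) and M > 0 such that |S_{i,k}(x)| ≤ s and ‖q_{i,k}(x)‖ ≤ M for all x, i, k. Then there exists a function f* : X → Y with sup_{x∈X} ‖f*(x)‖ ≤ M/(1−s) such that for every f_0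 : X → Y with sup_{x∈X} ‖f_0(x)‖ ≤ M/(1−s), the backward trajectories Ψ_k(f_0) := T_1 ∘ T_2 ∘ ⋯ ∘ T_k (f_0) converge uniformly on X to f*, i.e. sup_{x∈X} ‖Ψ_k(f_0)(x) − f*(x)‖ → 0 as k → ∞; in particular the limit f* is independent of the choice of f_0 in this ball. The function f* is called a non-stationary fractal function. -/
open Filter Topology

/-- For a sequence of affine Read–Bajraktarević operators
`T_k g (l_{i,k} x) = q_{i,k} x + S_{i,k} x • g x` on functions into a Banach space `Y`, with
`|S_{i,k}| ≤ s < 1` and `‖q_{i,k}‖ ≤ M`, there is a function `f*` in the sup-norm ball of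
radius `M/(1-s)` such that the backward trajectories of every `f₀` in that ball converge
uniformly on `X` to `f*` (a non-stationary fractal function). -/
theorem affine_RB_backward_tendstoUniformly {X Y : Type*} [Nonempty X]
    [NormedAddCommGroup Y] [NormedSpace ℝ Y] [CompleteSpace Y]
    (n : ℕ → ℕ) (l : (k : ℕ) → Fin (n k) → X → X)
    (hinj : ∀ k i, Function.Injective (l k i))
    (hcover : ∀ k, (⋃ i, Set.range (l k i)) = Set.univ)
    (hdisj : ∀ k i j, i ≠ j → Set.range (l k i) ∩ Set.range (l k j) = ∅)
    (q : (k : ℕ) → Fin (n k) → X → Y) (S : (k : ℕ) → Fin (n k) → X → ℝ)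
    (T : ℕ → (X → Y) → (X → Y))
    (hT : ∀ k (g : X → Y) i x, T k g (l k i x) = q k i x + S k i x • g x)
    (s M : ℝ) (hs0 : 0 ≤ s) (hs1 : s < 1) (hM : 0 < M)
    (hS : ∀ k i x, |S k i x| ≤ s) (hq : ∀ k i x, ‖q k i x‖ ≤ M) :
    ∃ fs : X → Y, (∀ x, ‖fs x‖ ≤ M / (1 - s)) ∧
      ∀ f₀ : X → Y, (∀ x, ‖f₀ x‖ ≤ M / (1 - s)) →
        TendstoUniformly (fun k => backwardTraj T k f₀) fs atTop := by
  set R := M / (1 - s) with hRdef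
  have h1s : 0 < 1 - s := by linarith
  have hR : 0 < R := div_pos hM h1s
  -- every point of X is covered
  have hcov : ∀ k (y : X), ∃ i x, l k i x = y := by
    intro k y
    have hy : y ∈ (⋃ i, Set.range (l k i)) := (hcover k) ▸ Set.mem_univ y
    simpa [Set.mem_iUnion, Set.mem_range] using hy
  -- contraction of a single operator
  have hcontr : ∀ k (g h : X → Y) (D : ℝ), (∀ x, ‖g x - h x‖ ≤ D) →
      ∀ y, ‖T k g y - T k h y‖ ≤ s * D := by
    intro k g h D hD y
    obtain ⟨i, x, rfl⟩ := hcov k y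
    rw [hT, hT]
    have he : q k i x + S k i x • g x - (q k i x + S k i x • h x)
        = S k i x • (g x - h x) := by rw [smul_sub]; abel
    rw [he, norm_smul]
    exact mul_le_mul (by simpa using hS k i x) (hD x) (norm_nonneg _) hs0
  -- ball invariance of a single operator
  have hball : ∀ k (g : X → Y), (∀ x, ‖g x‖ ≤ R) → ∀ y, ‖T k g y‖ ≤ R := by
    intro k g hg y
    obtain ⟨i, x, rfl⟩ := hcov k y
    rw [hT]
    have hMR : M + s * R = R := by rw [hRdef]; field_simp; ring
    calc ‖q k i x + S k i x • g x‖ ≤ ‖q k i x‖ + ‖S k i x • g x‖ := norm_add_le _ _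
      _ ≤ M + s * R := add_le_add (hq k i x)
          (by rw [norm_smul]
              exact mul_le_mul (by simpa using hS k i x) (hg x) (norm_nonneg _) hs0)
      _ = R := hMR
  -- contraction of backward trajectories
  have hBcontr : ∀ k (g h : X → Y) (D : ℝ), (∀ x, ‖g x - h x‖ ≤ D) →
      ∀ y, ‖backwardTraj T k g y - backwardTraj T k h y‖ ≤ s ^ k * D := by
    intro k
    induction k with
    | zero => intro g h D hD y; simpa [backwardTraj] using hD y
    | succ k ih =>
      intro g h D hD y
      have h1 := hcontr k g h D hD
      calc ‖backwardTraj T (k+1) g y - backwardTraj T (k+1) h y‖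
          = ‖backwardTraj T k (T k g) y - backwardTraj T k (T k h) y‖ := by
            simp [backwardTraj]
        _ ≤ s ^ k * (s * D) := ih (T k g) (T k h) (s * D) h1 y
        _ = s ^ (k+1) * D := by ring
  -- ball invariance of backward trajectories (for any sub-family satisfying invariance)
  have hBball : ∀ (T' : ℕ → (X → Y) → (X → Y)),
      (∀ k (g : X → Y), (∀ x, ‖g x‖ ≤ R) → ∀ y, ‖T' k g y‖ ≤ R) →
      ∀ k (g : X → Y), (∀ x, ‖g x‖ ≤ R) → ∀ y, ‖backwardTraj T' k g y‖ ≤ R := by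
    intro T' hT' k
    induction k with
    | zero => intro g hg y; simpa [backwardTraj] using hg y
    | succ k ih =>
      intro g hg y
      have := ih (T' k g) (fun x => hT' k g hg x)
      simpa [backwardTraj] using this y
  -- shift lemma
  have hshift : ∀ k m (f : X → Y),
      backwardTraj T (k + m) f = backwardTraj T k (backwardTraj (fun j => T (k + j)) m f) := by
    intro k m
    induction m with
    | zero => intro f; simp [backwardTraj]
    | succ m ih =>
      intro f
      have hkm : k + (m + 1) = (k + m) + 1 := by ring
      rw [hkm]
      show backwardTraj T (k + m) (T (k + m) f) = _
      rw [ih (T (k + m) f)]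
      rfl
  -- key cross estimate
  have hkey : ∀ (f g : X → Y), (∀ x, ‖f x‖ ≤ R) → (∀ x, ‖g x‖ ≤ R) →
      ∀ k m y, ‖backwardTraj T (k + m) f y - backwardTraj T k g y‖ ≤ s ^ k * (2 * R) := by
    intro f g hf hg k m y
    rw [hshift]
    refine hBcontr k _ g (2 * R) (fun x => ?_) y
    have h1 : ‖backwardTraj (fun j => T (k + j)) m f x‖ ≤ R :=
      hBball _ (fun j => hball (k + j)) m f hf x
    calc ‖backwardTraj (fun j => T (k + j)) m f x - g x‖
        ≤ ‖backwardTraj (fun j => T (k + j)) m f x‖ + ‖g x‖ := norm_sub_le _ _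
      _ ≤ R + R := add_le_add h1 (hg x)
      _ = 2 * R := by ring
  -- the base point
  set f₀₀ : X → Y := fun _ => (0 : Y) with hf00def
  have hf00 : ∀ x, ‖f₀₀ x‖ ≤ R := fun x => by simp [hf00def]; exact hR.le
  -- the geometric bound tends to 0
  have hgeo : Tendsto (fun k : ℕ => s ^ k * (2 * R)) atTop (𝓝 0) := by
    have := (tendsto_pow_atTop_nhds_zero_of_lt_one hs0 hs1).mul_const (2 * R)
    simpa using this
  -- pointwise limit exists
  have hex : ∀ x : X, ∃ L : Y,
      Tendsto (fun k => backwardTraj T k f₀₀ x) atTop (𝓝 L) := by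
    intro x
    apply cauchySeq_tendsto_of_complete
    apply cauchySeq_of_le_tendsto_0 (fun N => s ^ N * (2 * R)) _ hgeo
    intro a b N ha hb
    rcases le_total a b with hab | hab
    · obtain ⟨m, rfl⟩ := Nat.exists_eq_add_of_le hab
      rw [dist_comm, dist_eq_norm]
      calc ‖backwardTraj T (a + m) f₀₀ x - backwardTraj T a f₀₀ x‖
          ≤ s ^ a * (2 * R) := hkey f₀₀ f₀₀ hf00 hf00 a m x
        _ ≤ s ^ N * (2 * R) := by
            have := pow_le_pow_of_le_one hs0 hs1.le ha
            nlinarith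
    · obtain ⟨m, rfl⟩ := Nat.exists_eq_add_of_le hab
      rw [dist_eq_norm]
      calc ‖backwardTraj T (b + m) f₀₀ x - backwardTraj T b f₀₀ x‖
          ≤ s ^ b * (2 * R) := hkey f₀₀ f₀₀ hf00 hf00 b m x
        _ ≤ s ^ N * (2 * R) := by
            have := pow_le_pow_of_le_one hs0 hs1.le hb
            nlinarith
  choose fs hfs using hex
  -- fs is in the ball
  have hfsball : ∀ x, ‖fs x‖ ≤ R := by
    intro x
    refine le_of_tendsto ((continuous_norm.tendsto _).comp (hfs x)) ?_
    filter_upwards with k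
    exact hBball T hball k f₀₀ hf00 x
  -- key estimate against the limit
  have hlimest : ∀ (f₀ : X → Y), (∀ x, ‖f₀ x‖ ≤ R) →
      ∀ k x, ‖backwardTraj T k f₀ x - fs x‖ ≤ s ^ k * (2 * R) := by
    intro f₀ hf₀ k x
    have hto : Tendsto (fun m => backwardTraj T (k + m) f₀₀ x) atTop (𝓝 (fs x)) := by
      have h1 : Tendsto (fun m : ℕ => k + m) atTop atTop := by
        simpa [add_comm] using tendsto_add_atTop_nat k
      exact (hfs x).comp h1
    have hc : Continuous fun y : Y => ‖backwardTraj T k f₀ x - y‖ :=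
      (continuous_const.sub continuous_id).norm
    have hto2 : Tendsto (fun m => ‖backwardTraj T k f₀ x - backwardTraj T (k + m) f₀₀ x‖)
        atTop (𝓝 ‖backwardTraj T k f₀ x - fs x‖) := (hc.tendsto (fs x)).comp hto
    refine le_of_tendsto hto2 ?_
    filter_upwards with m
    rw [← norm_neg, neg_sub]
    exact hkey f₀₀ f₀ hf00 hf₀ k m x
  refine ⟨fs, hfsball, ?_⟩
  intro f₀ hf₀
  rw [Metric.tendstoUniformly_iff]
  intro ε hε
  have : ∀ᶠ k : ℕ in atTop, s ^ k * (2 * R) < ε :=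
    hgeo.eventually (Filter.Tendsto.eventually_lt_const hε tendsto_id) |>.mono (fun k hk => hk)
  filter_upwards [this] with k hk x
  rw [dist_comm, dist_eq_norm]
  exact lt_of_le_of_lt (hlimest f₀ hf₀ k x) hk
end

section
/- Let (X, Σ, μ) be a measure space, Y a Banach space over ℝ, and 1 ≤ p < ∞. Let l_1, …, l_n : X → X be measurable injective maps whose images l_i(X) are measurable, pairwise disjoint, and cover X, such that each l_i has a measurable inverse on its image, and suppose there are constants L_i > 0 with μ(l_i(A)) ≤ L_i·μ(A) for every measurable set A ⊆ X. Let q_i : X → Y and S_i : X → ℝ be measurable with |S_i(x)| ≤ s_i for μ-a.e. x ∈ X, and let T be the affine Read–Bajraktarević operator determined by T g (l_i(x)) = q_i(x) + S_i(x)·g(x) for x ∈ X, i = 1,…,n. Then for all measurable g, h : X → Y, ∫_X ‖T g(x) − T h(x)‖^p dμ(x) ≤ (Σ_{i=1}^n s_i^p · L_i) · ∫_X ‖g(x) − h(x)‖^p dμ(x); equivalently, ‖T g − T h‖_{L^p} ≤ (Σ_{i=1}^n s_i^p L_i)^{1/p} ‖g − h‖_{L^p}. -/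
open MeasureTheory
open scoped ENNReal NNReal

/-!
On the piece `l i '' X` the difference `T g - T h` is `S i • (g - h)` transported along `l i`.
Since `μ (l i '' A) ≤ L i * μ A`, the pullback `μ.comap (l i)` is dominated by `L i • μ`, so the
change of variables along the measurable embedding `l i` costs at most the factor `L i`, and
`‖S i‖ ≤ s i` costs `s i ^ p`. The pieces cover `X`, so summing these bounds gives the estimate.
-/

namespace MeasureTheory

variable {α β : Type*} [MeasurableSpace α] [MeasurableSpace β]

theorem MeasurableEmbedding.comap_le_smul {f : α → β} (hf : MeasurableEmbedding f)
    {μ : Measure β} {ν : Measure α} {c : ℝ≥0∞}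
    (hμ : ∀ A, MeasurableSet A → μ (f '' A) ≤ c * ν A) : μ.comap f ≤ c • ν :=
  Measure.le_iff.2 fun A hA => by simpa [hf.comap_apply] using hμ A hA

theorem MeasurableEmbedding.setLIntegral_range_le_mul {f : α → β} (hf : MeasurableEmbedding f)
    {μ : Measure β} {ν : Measure α} {c : ℝ≥0∞}
    (hμ : ∀ A, MeasurableSet A → μ (f '' A) ≤ c * ν A) (F : β → ℝ≥0∞) :
    ∫⁻ x in Set.range f, F x ∂μ ≤ c * ∫⁻ y, F (f y) ∂ν := by
  rw [← hf.map_comap, hf.lintegral_map, ← smul_eq_mul, ← lintegral_smul_measure]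
  exact lintegral_mono' (hf.comap_le_smul hμ) le_rfl

theorem lintegral_le_sum_setLIntegral_of_iUnion_eq_univ {ι : Type*} [Fintype ι]
    {μ : Measure α} {s : ι → Set α} (hs : ⋃ i, s i = Set.univ) (F : α → ℝ≥0∞) :
    ∫⁻ x, F x ∂μ ≤ ∑ i, ∫⁻ x in s i, F x ∂μ := by
  simpa [hs, tsum_fintype] using lintegral_iUnion_le (μ := μ) s F

theorem lintegral_nnnorm_smul_rpow_le {𝕜 E : Type*} [NormedField 𝕜]
    [SeminormedAddCommGroup E] [NormedSpace 𝕜 E] {μ : Measure α} {p : ℝ} (hp : 0 ≤ p)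
    {c : α → 𝕜} {C : ℝ≥0} (hc : ∀ᵐ x ∂μ, ‖c x‖₊ ≤ C) (v : α → E) :
    ∫⁻ x, (‖c x • v x‖₊ : ℝ≥0∞) ^ p ∂μ ≤ (C : ℝ≥0∞) ^ p * ∫⁻ x, (‖v x‖₊ : ℝ≥0∞) ^ p ∂μ := by
  rw [← lintegral_const_mul' _ _ (ENNReal.rpow_ne_top_of_nonneg hp ENNReal.coe_ne_top)]
  refine lintegral_mono_ae (hc.mono fun x hx => ?_)
  rw [nnnorm_smul, ENNReal.coe_mul, ENNReal.mul_rpow_of_nonneg _ _ hp]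
  gcongr

end MeasureTheory

theorem affine_RB_Lp_lipschitz_general {X Y : Type*} [MeasurableSpace X]
    [NormedAddCommGroup Y] [NormedSpace ℝ Y]
    (μ : Measure X) (p : ℝ) (hp : 1 ≤ p)
    (n : ℕ) (l : Fin n → X → X)
    (hinj : ∀ i, Function.Injective (l i))
    (hmeas : ∀ i, Measurable (l i))
    (himg : ∀ i (A : Set X), MeasurableSet A → MeasurableSet (l i '' A))
    (hcover : (⋃ i, Set.range (l i)) = Set.univ)
    (L : Fin n → NNReal)
    (hLmu : ∀ i (A : Set X), MeasurableSet A → μ (l i '' A) ≤ (L i : ENNReal) * μ A)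
    (q : Fin n → X → Y) (S : Fin n → X → ℝ)
    (s : Fin n → NNReal) (hS : ∀ i, ∀ᵐ x ∂μ, ‖S i x‖₊ ≤ s i)
    (T : (X → Y) → (X → Y))
    (hT : ∀ (g : X → Y) i x, T g (l i x) = q i x + S i x • g x) :
    ∀ g h : X → Y, StronglyMeasurable g → StronglyMeasurable h →
      ∫⁻ x, (‖T g x - T h x‖₊ : ENNReal) ^ p ∂μ ≤
        (∑ i, (s i : ENNReal) ^ p * (L i : ENNReal)) *
          ∫⁻ x, (‖g x - h x‖₊ : ENNReal) ^ p ∂μ := by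
  intro g h _ _
  have hemb (i : Fin n) : MeasurableEmbedding (l i) := ⟨hinj i, hmeas i, fun _ hA => himg i _ hA⟩
  have hdiff (i : Fin n) (y : X) : T g (l i y) - T h (l i y) = S i y • (g y - h y) := by
    rw [hT, hT, smul_sub, add_sub_add_left_eq_sub]
  calc ∫⁻ x, (‖T g x - T h x‖₊ : ℝ≥0∞) ^ p ∂μ
      ≤ ∑ i, ∫⁻ x in Set.range (l i), (‖T g x - T h x‖₊ : ℝ≥0∞) ^ p ∂μ :=
        lintegral_le_sum_setLIntegral_of_iUnion_eq_univ hcover _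
    _ ≤ ∑ i, (L i : ℝ≥0∞) * ∫⁻ y, (‖S i y • (g y - h y)‖₊ : ℝ≥0∞) ^ p ∂μ := by
        gcongr with i
        simpa only [hdiff] using (hemb i).setLIntegral_range_le_mul (hLmu i)
          fun x => (‖T g x - T h x‖₊ : ℝ≥0∞) ^ p
    _ ≤ ∑ i, (L i : ℝ≥0∞) * ((s i : ℝ≥0∞) ^ p * ∫⁻ y, (‖g y - h y‖₊ : ℝ≥0∞) ^ p ∂μ) := by
        gcongr with i
        exact lintegral_nnnorm_smul_rpow_le (zero_le_one.trans hp) (hS i) _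
    _ = (∑ i, (s i : ℝ≥0∞) ^ p * L i) * ∫⁻ x, (‖g x - h x‖₊ : ℝ≥0∞) ^ p ∂μ := by
        rw [Finset.sum_mul]
        exact Finset.sum_congr rfl fun i _ => by ring

/-- `L^p`-Lipschitz estimate for the affine Read–Bajraktarević operator
`T g (l i x) = q i x + S i x • g x`, where the injective measurable maps `l i` have
measurable images (with measurable inverses), partition `X`, and satisfy
`μ(l i '' A) ≤ L i · μ(A)`, and `‖S i‖ ≤ s i` a.e.:
`∫ ‖Tg − Th‖^p dμ ≤ (∑ i, s iᵖ · L i) · ∫ ‖g − h‖^p dμ`. -/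
theorem affine_RB_Lp_lipschitz {X Y : Type*} [MeasurableSpace X]
    [NormedAddCommGroup Y] [NormedSpace ℝ Y]
    (μ : Measure X) (p : ℝ) (hp : 1 ≤ p)
    (n : ℕ) (l : Fin n → X → X)
    (hinj : ∀ i, Function.Injective (l i))
    (hmeas : ∀ i, Measurable (l i))
    (himg : ∀ i (A : Set X), MeasurableSet A → MeasurableSet (l i '' A))
    (hcover : (⋃ i, Set.range (l i)) = Set.univ)
    (hdisj : ∀ i j, i ≠ j → Set.range (l i) ∩ Set.range (l j) = ∅)
    (L : Fin n → NNReal) (hL : ∀ i, 0 < L i)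
    (hLmu : ∀ i (A : Set X), MeasurableSet A → μ (l i '' A) ≤ (L i : ENNReal) * μ A)
    (q : Fin n → X → Y) (S : Fin n → X → ℝ)
    (hq : ∀ i, StronglyMeasurable (q i)) (hSmeas : ∀ i, Measurable (S i))
    (s : Fin n → NNReal) (hS : ∀ i, ∀ᵐ x ∂μ, ‖S i x‖₊ ≤ s i)
    (T : (X → Y) → (X → Y))
    (hT : ∀ (g : X → Y) i x, T g (l i x) = q i x + S i x • g x) :
    ∀ g h : X → Y, StronglyMeasurable g → StronglyMeasurable h →
      ∫⁻ x, (‖T g x - T h x‖₊ : ENNReal) ^ p ∂μ ≤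
        (∑ i, (s i : ENNReal) ^ p * (L i : ENNReal)) *
          ∫⁻ x, (‖g x - h x‖₊ : ENNReal) ^ p ∂μ :=
  affine_RB_Lp_lipschitz_general μ p hp n l hinj hmeas himg hcover L hLmu q S s hS T hT
end

section
/- Let (X, Σ, μ) be a measure space, Y a Banach space over ℝ, 1 ≤ p ≤ ∞, and let L^p(μ, Y) denote the Banach space of (equivalence classes of) Bochner-measurable Y-valued functions with finite L^p-norm. Let {T_k}_{k∈ℕ} be a sequence of maps T_k : L^p(μ, Y) → L^p(μ, Y) such that, for some γ ∈ [0,1) and M > 0, every T_k is Lipschitz with constant at most γ and ‖T_k(0)‖_{L^p} ≤ M for all k. Then there exists f* ∈ L^p(μ, Y) with ‖f*‖_{L^p} ≤ M/(1−γ) such that for every f_0 ∈ L^p(μ, Y) with ‖f_0‖_{L^p} ≤ M/(1−γ), the backward trajectories Ψ_k(f_0) := T_1 ∘ T_2 ∘ ⋯ ∘ T_k (f_0) converge to f* in L^p(μ, Y) as k → ∞; in particular the limit f* is independent of the choice of f_0 in this ball. -/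
/-!
The backward trajectories of the contractions `T k` all contract distances by `γ ^ k`, so the
trajectory of any single point is Cauchy (its consecutive terms differ by at most `γ ^ n M`) and
all trajectories share its limit. The ball of radius `M / (1 - γ)` about `0` is mapped into
itself by every `T k`, hence contains the trajectory of `0` and, being closed, its limit.
-/

open Filter Topology MeasureTheory

open Metric Set

section backwardTraj

variable {α : Type*} {T : ℕ → α → α}

theorem Set.MapsTo.backwardTraj {s : Set α} (hT : ∀ k, MapsTo (T k) s s) :
    ∀ k, MapsTo (backwardTraj T k) s s
  | 0 => mapsTo_id s
  | k + 1 => (Set.MapsTo.backwardTraj hT k).comp (hT k)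

theorem LipschitzWith.backwardTraj [PseudoEMetricSpace α] {γ : NNReal}
    (hlip : ∀ k, LipschitzWith γ (T k)) : ∀ k, LipschitzWith (γ ^ k) (backwardTraj T k)
  | 0 => by simpa [_root_.backwardTraj] using LipschitzWith.id
  | k + 1 => by
      rw [pow_succ]
      exact (LipschitzWith.backwardTraj hlip k).comp (hlip k)

variable [MetricSpace α] {γ : NNReal}

theorem cauchySeq_backwardTraj (hγ : γ < 1) (hlip : ∀ k, LipschitzWith γ (T k)) {a : α} {C : ℝ}
    (hC : ∀ k, dist a (T k a) ≤ C) : CauchySeq fun k => backwardTraj T k a := by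
  refine cauchySeq_of_le_geometric (γ : ℝ) C hγ fun n => ?_
  calc dist (backwardTraj T n a) (backwardTraj T n (T n a))
      ≤ (γ : ℝ) ^ n * dist a (T n a) := by
        simpa using (LipschitzWith.backwardTraj hlip n).dist_le_mul a (T n a)
    _ ≤ (γ : ℝ) ^ n * C := by gcongr; exact hC n
    _ = C * (γ : ℝ) ^ n := mul_comm _ _

theorem tendsto_backwardTraj_of_tendsto (hγ : γ < 1) (hlip : ∀ k, LipschitzWith γ (T k))
    {a : α} {l : α} (ha : Tendsto (fun k => backwardTraj T k a) atTop (𝓝 l)) (b : α) :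
    Tendsto (fun k => backwardTraj T k b) atTop (𝓝 l) := by
  refine ha.congr_dist (squeeze_zero (fun _ => dist_nonneg)
    (fun k => (LipschitzWith.backwardTraj hlip k).dist_le_mul a b) ?_)
  simpa using (tendsto_pow_atTop_nhds_zero_of_lt_one γ.2 hγ).mul_const (dist a b)

theorem exists_tendsto_backwardTraj_s16 [CompleteSpace α] (hγ : γ < 1)
    (hlip : ∀ k, LipschitzWith γ (T k)) {a : α} {C : ℝ} (hC : ∀ k, dist a (T k a) ≤ C) :
    ∃ l, ∀ b, Tendsto (fun k => backwardTraj T k b) atTop (𝓝 l) := by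
  obtain ⟨l, hl⟩ := cauchySeq_tendsto_of_complete (cauchySeq_backwardTraj hγ hlip hC)
  exact ⟨l, tendsto_backwardTraj_of_tendsto hγ hlip hl⟩

end backwardTraj

theorem LipschitzWith.mapsTo_closedBall_zero {E : Type*} [SeminormedAddCommGroup E] {f : E → E}
    {K : NNReal} (hf : LipschitzWith K f) (hK : K < 1) {M : ℝ} (hM : ‖f 0‖ ≤ M) :
    MapsTo f (closedBall 0 (M / (1 - K))) (closedBall 0 (M / (1 - K))) := by
  intro x hx
  rw [mem_closedBall_zero_iff] at hx ⊢
  have hK' : 0 < 1 - (K : ℝ) := sub_pos.2 hK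
  have hfx : ‖f x - f 0‖ ≤ K * ‖x‖ := by simpa [dist_eq_norm] using hf.dist_le_mul x 0
  calc ‖f x‖ ≤ ‖f x - f 0‖ + ‖f 0‖ := norm_le_norm_sub_add _ _
    _ ≤ K * (M / (1 - K)) + M := by gcongr; exact hfx.trans (by gcongr)
    _ = M / (1 - K) := by field_simp; ring

theorem nonstationary_fractal_function_Lp_general {X Y : Type*} [MeasurableSpace X]
    [NormedAddCommGroup Y] [CompleteSpace Y]
    (μ : Measure X) (p : ENNReal) [Fact (1 ≤ p)]
    (T : ℕ → Lp Y p μ → Lp Y p μ)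
    (γ : NNReal) (hγ : γ < 1) (M : ℝ)
    (hlip : ∀ k, LipschitzWith γ (T k))
    (hT0 : ∀ k, ‖T k 0‖ ≤ M) :
    ∃ fs : Lp Y p μ, ‖fs‖ ≤ M / (1 - (γ : ℝ)) ∧
      ∀ f₀ : Lp Y p μ, ‖f₀‖ ≤ M / (1 - (γ : ℝ)) →
        Tendsto (fun k => backwardTraj T k f₀) atTop (𝓝 fs) := by
  obtain ⟨fs, hfs⟩ := exists_tendsto_backwardTraj_s16 hγ hlip (a := 0) (C := M)
    (fun k => by simpa [dist_comm] using hT0 k)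
  refine ⟨fs, ?_, fun f₀ _ => hfs f₀⟩
  have hball := Set.MapsTo.backwardTraj fun k => (hlip k).mapsTo_closedBall_zero hγ (hT0 k)
  have h0 : (0 : Lp Y p μ) ∈ closedBall 0 (M / (1 - γ)) :=
    mem_closedBall_self (div_nonneg ((norm_nonneg _).trans (hT0 0)) (sub_nonneg.2 hγ.le))
  exact mem_closedBall_zero_iff.1 <| isClosed_closedBall.mem_of_tendsto (hfs 0)
    (Eventually.of_forall fun k => hball k h0)

/-- If `T_k : L^p(μ,Y) → L^p(μ,Y)` are uniformly Lipschitz with constant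
`γ < 1` and `‖T_k 0‖ ≤ M`, then there is `f* ∈ L^p(μ,Y)` with `‖f*‖ ≤ M/(1-γ)` such that
the backward trajectories of every `f₀` with `‖f₀‖ ≤ M/(1-γ)` converge to `f*` in
`L^p(μ,Y)` (a non-stationary fractal function of class `L^p`). -/
theorem nonstationary_fractal_function_Lp {X Y : Type*} [MeasurableSpace X]
    [NormedAddCommGroup Y] [NormedSpace ℝ Y] [CompleteSpace Y]
    (μ : Measure X) (p : ENNReal) [Fact (1 ≤ p)]
    (T : ℕ → Lp Y p μ → Lp Y p μ)
    (γ : NNReal) (hγ : γ < 1) (M : ℝ) (hM : 0 < M)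
    (hlip : ∀ k, LipschitzWith γ (T k))
    (hT0 : ∀ k, ‖T k 0‖ ≤ M) :
    ∃ fs : Lp Y p μ, ‖fs‖ ≤ M / (1 - (γ : ℝ)) ∧
      ∀ f₀ : Lp Y p μ, ‖f₀‖ ≤ M / (1 - (γ : ℝ)) →
        Tendsto (fun k => backwardTraj T k f₀) atTop (𝓝 fs) :=
  nonstationary_fractal_function_Lp_general μ p T γ hγ M hlip hT0
end
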